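/- arXiv:1101.1239 — 2 statements merged into one kernel-verified Lean document; each statement's English description precedes it below -/
import Mathlib

section
/- Let G be a finite group acting unitarily on a finite-dimensional complex inner product space V, let A : V → V be self-adjoint and commute with the action of G, and let G₁, G₂ be subgroups of G such that every conjugacy class of G meets G₁ and G₂ in the same number of elements. Then Tr(A restricted to V^{G₁}) = Tr(A restricted to V^{G₂}). -/
/-!
For a finite group `H` acting on `V` with invariants `W`, the operator `P = ∑_{h ∈ H} ρ h` maps
`V` into `W` and is multiplication by `|H|` on `W`. Hence for `A` preserving `W`,
`|H| · Tr(A|_W) = Tr(A P) = ∑_{h ∈ H} Tr(A ρ h)`. When `A` commutes with `ρ`, `g ↦ Tr(A ρ g)` is a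
class function, and almost conjugate subgroups have the same order and the same sums of class
functions, since these sums only depend on how many elements of each conjugacy class they contain.
-/

open Finset

namespace Subgroup

variable {G : Type*} [Group G]

def AlmostConjugate (G₁ G₂ : Subgroup G) : Prop :=
  ∀ g : G, Nat.card {x : G | IsConj g x ∧ x ∈ G₁} = Nat.card {x : G | IsConj g x ∧ x ∈ G₂}

theorem AlmostConjugate.card_carrier_inter {G₁ G₂ : Subgroup G} (h : G₁.AlmostConjugate G₂)
    (c : ConjClasses G) :
    Nat.card ↥(c.carrier ∩ (G₁ : Set G)) = Nat.card ↥(c.carrier ∩ (G₂ : Set G)) := by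
  obtain ⟨g, rfl⟩ := ConjClasses.mk_surjective c
  exact h g

variable [Fintype G]

theorem sum_conjClasses_mk [DecidableEq G] (H : Subgroup G) [DecidablePred (· ∈ H)]
    {M : Type*} [AddCommMonoid M] (F : ConjClasses G → M) :
    ∑ h : H, F (ConjClasses.mk h) = ∑ c, Nat.card ↥(c.carrier ∩ (H : Set G)) • F c := by
  rw [← sum_fiberwise' univ (fun h : H ↦ ConjClasses.mk (h : G)) F]
  refine sum_congr rfl fun c _ ↦ ?_
  rw [sum_const, ← Fintype.card_subtype, ← Nat.card_eq_fintype_card]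
  refine congrArg (· • F c) (Nat.card_congr <|
    (Equiv.subtypeSubtypeEquivSubtypeInter (· ∈ H) (ConjClasses.mk · = c)).trans
      (Equiv.subtypeEquivRight fun x ↦ ?_))
  simp [and_comm, ConjClasses.mem_carrier_iff_mk_eq]

theorem AlmostConjugate.sum_eq {G₁ G₂ : Subgroup G} (h : G₁.AlmostConjugate G₂)
    [DecidablePred (· ∈ G₁)] [DecidablePred (· ∈ G₂)] {M : Type*} [AddCommMonoid M]
    (f : G → M) (hf : ∀ a b, IsConj a b → f a = f b) :
    ∑ x : G₁, f x = ∑ x : G₂, f x := by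
  classical
  let F : ConjClasses G → M := Quotient.lift f hf
  calc ∑ x : G₁, f x = ∑ c, Nat.card ↥(c.carrier ∩ (G₁ : Set G)) • F c := sum_conjClasses_mk G₁ F
    _ = ∑ c, Nat.card ↥(c.carrier ∩ (G₂ : Set G)) • F c := by simp only [h.card_carrier_inter]
    _ = ∑ x : G₂, f x := (sum_conjClasses_mk G₂ F).symm

theorem AlmostConjugate.card_eq {G₁ G₂ : Subgroup G} (h : G₁.AlmostConjugate G₂) :
    Nat.card G₁ = Nat.card G₂ := by
  classical
  simpa [Nat.card_eq_fintype_card] using h.sum_eq (fun _ ↦ (1 : ℕ)) fun _ _ _ ↦ rfl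

end Subgroup

section

variable {G : Type*} [Group G]

theorem LinearMap.trace_mul_eq_of_isConj {R M : Type*} [CommRing R] [AddCommGroup M]
    [Module R M] (ρ : G →* Module.End R M) {A : Module.End R M} (hA : ∀ g, Commute A (ρ g))
    {a b : G} (h : IsConj a b) : trace R M (A * ρ a) = trace R M (A * ρ b) := by
  obtain ⟨c, rfl⟩ := isConj_iff.1 h
  have hconj : A * ρ (c * a * c⁻¹) = ρ.toHomUnits c * (A * ρ a) * ↑(ρ.toHomUnits c)⁻¹ := by
    rw [← map_inv, MonoidHom.coe_toHomUnits, MonoidHom.coe_toHomUnits, map_mul, map_mul,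
      ← mul_assoc, ← mul_assoc, (hA c).eq, mul_assoc (ρ c)]
  rw [hconj, trace_conj]

variable [Fintype G] {K V : Type*} [Field K] [AddCommGroup V] [Module K V] [FiniteDimensional K V]

theorem card_smul_trace_restrict_eq_sum_trace (ρ : G →* Module.End K V) {W : Submodule K V}
    (hW : ∀ v, v ∈ W ↔ ∀ g, ρ g v = v) {A : Module.End K V} (hA : ∀ x ∈ W, A x ∈ W) :
    Nat.card G • LinearMap.trace K W (A.restrict hA) = ∑ g, LinearMap.trace K V (A * ρ g) := by
  set P : Module.End K V := ∑ g, ρ g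
  have hP_mem : ∀ x, P x ∈ W := fun x ↦ (hW _).2 fun h ↦ by
    simp only [P, LinearMap.sum_apply, map_sum, ← Module.End.mul_apply, ← map_mul]
    exact Equiv.sum_comp (Equiv.mulLeft h) (fun g ↦ ρ g x)
  have hP_fix : ∀ x ∈ W, P x = Nat.card G • x := fun x hx ↦ by
    simp [P, LinearMap.sum_apply, (hW x).1 hx, Nat.card_eq_fintype_card]
  have hAP : ∀ x ∈ W, (A * P) x ∈ W := fun x _ ↦ hA _ (hP_mem x)
  have hrestrict : (A * P).restrict hAP = Nat.card G • A.restrict hA := by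
    ext x
    simp [LinearMap.restrict_apply, hP_fix x x.2]
  rw [← map_nsmul, ← hrestrict,
    LinearMap.trace_restrict_eq_of_forall_mem W (A * P) (fun x ↦ hA _ (hP_mem x)),
    Finset.mul_sum, map_sum]

end

theorem stmt_5_general (V : Type*) [NormedAddCommGroup V] [InnerProductSpace ℂ V]
    [FiniteDimensional ℂ V]
    (G : Type*) [Group G] [Fintype G]
    (ρ : G →* (V →ₗ[ℂ] V))
    (A : V →ₗ[ℂ] V)
    (hcomm : ∀ g : G, A ∘ₗ ρ g = ρ g ∘ₗ A)
    (G₁ G₂ : Subgroup G)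
    (halmost : ∀ g : G,
      Nat.card {x : G | IsConj g x ∧ x ∈ G₁} = Nat.card {x : G | IsConj g x ∧ x ∈ G₂})
    (W₁ W₂ : Submodule ℂ V)
    (hW₁ : ∀ v : V, v ∈ W₁ ↔ ∀ g ∈ G₁, ρ g v = v)
    (hW₂ : ∀ v : V, v ∈ W₂ ↔ ∀ g ∈ G₂, ρ g v = v)
    (hres₁ : ∀ x ∈ W₁, A x ∈ W₁) (hres₂ : ∀ x ∈ W₂, A x ∈ W₂) :
    LinearMap.trace ℂ W₁ (A.restrict hres₁) = LinearMap.trace ℂ W₂ (A.restrict hres₂) := by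
  classical
  have halmost : G₁.AlmostConjugate G₂ := halmost
  apply smul_right_injective ℂ (Nat.card_pos (α := G₁)).ne'
  calc Nat.card G₁ • LinearMap.trace ℂ W₁ (A.restrict hres₁)
      = ∑ g : G₁, LinearMap.trace ℂ V (A * ρ g) :=
        card_smul_trace_restrict_eq_sum_trace (ρ.comp G₁.subtype) (fun v ↦ by simp [hW₁]) hres₁
    _ = ∑ g : G₂, LinearMap.trace ℂ V (A * ρ g) :=
        halmost.sum_eq _ fun _ _ ↦ LinearMap.trace_mul_eq_of_isConj ρ hcomm
    _ = Nat.card G₂ • LinearMap.trace ℂ W₂ (A.restrict hres₂) :=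
        (card_smul_trace_restrict_eq_sum_trace (ρ.comp G₂.subtype) (fun v ↦ by simp [hW₂])
          hres₂).symm
    _ = Nat.card G₁ • LinearMap.trace ℂ W₂ (A.restrict hres₂) := by rw [halmost.card_eq]

/-- If G₁, G₂ are almost conjugate subgroups of a finite group G acting unitarily on V,
and A is self-adjoint and commutes with the action, then the traces of A restricted to
the G₁- and G₂-invariants are equal. -/
theorem stmt_5 (V : Type*) [NormedAddCommGroup V] [InnerProductSpace ℂ V]
    [FiniteDimensional ℂ V]
    (G : Type*) [Group G] [Fintype G]
    (ρ : G →* (V →ₗ[ℂ] V))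
    (hunit : ∀ (g : G) (x y : V), (inner ℂ (ρ g x) (ρ g y) : ℂ) = inner ℂ x y)
    (A : V →ₗ[ℂ] V) (hA : A.IsSymmetric)
    (hcomm : ∀ g : G, A ∘ₗ ρ g = ρ g ∘ₗ A)
    (G₁ G₂ : Subgroup G)
    (halmost : ∀ g : G,
      Nat.card {x : G | IsConj g x ∧ x ∈ G₁} = Nat.card {x : G | IsConj g x ∧ x ∈ G₂})
    (W₁ W₂ : Submodule ℂ V)
    (hW₁ : ∀ v : V, v ∈ W₁ ↔ ∀ g ∈ G₁, ρ g v = v)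
    (hW₂ : ∀ v : V, v ∈ W₂ ↔ ∀ g ∈ G₂, ρ g v = v)
    (hres₁ : ∀ x ∈ W₁, A x ∈ W₁) (hres₂ : ∀ x ∈ W₂, A x ∈ W₂) :
    LinearMap.trace ℂ W₁ (A.restrict hres₁) = LinearMap.trace ℂ W₂ (A.restrict hres₂) :=
  stmt_5_general V G ρ A hcomm G₁ G₂ halmost W₁ W₂ hW₁ hW₂ hres₁ hres₂
end

section
/- In the symmetric group S₆ acting on the letters {a,b,c,d,e,f}, the two subgroups G₁ = {id, (ab)(cd), (ac)(bd), (ad)(bc)} and G₂ = {id, (ab)(cd), (ab)(ef), (cd)(ef)} are not conjugate in S₆, yet every conjugacy class of S₆ meets G₁ and G₂ in the same number of elements. -/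
open Equiv

private abbrev a1 : Equiv.Perm (Fin 6) := Equiv.swap 0 1 * Equiv.swap 2 3
private abbrev a2 : Equiv.Perm (Fin 6) := Equiv.swap 0 2 * Equiv.swap 1 3
private abbrev a3 : Equiv.Perm (Fin 6) := Equiv.swap 0 3 * Equiv.swap 1 2
private abbrev b2 : Equiv.Perm (Fin 6) := Equiv.swap 0 1 * Equiv.swap 4 5
private abbrev b3 : Equiv.Perm (Fin 6) := Equiv.swap 2 3 * Equiv.swap 4 5

private lemma conj_a1_a2 : IsConj a1 a2 :=
  isConj_iff.mpr ⟨Equiv.swap 1 2, by decide⟩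

private lemma conj_a1_a3 : IsConj a1 a3 :=
  isConj_iff.mpr ⟨Equiv.swap 1 3, by decide⟩

private lemma conj_a1_b2 : IsConj a1 b2 :=
  isConj_iff.mpr ⟨Equiv.swap 2 4 * Equiv.swap 3 5, by decide⟩

private lemma conj_a1_b3 : IsConj a1 b3 :=
  isConj_iff.mpr ⟨Equiv.swap 0 2 * Equiv.swap 1 3 * Equiv.swap 2 4 * Equiv.swap 3 5, by decide⟩

/-- In S₆, the subgroups G₁ = {1,(01)(23),(02)(13),(03)(12)} and
G₂ = {1,(01)(23),(01)(45),(23)(45)} are not conjugate, yet every conjugacy class of S₆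
meets them in the same number of elements. -/
theorem stmt_7 (G₁ G₂ : Subgroup (Equiv.Perm (Fin 6)))
    (h₁ : (G₁ : Set (Equiv.Perm (Fin 6))) =
      {1, Equiv.swap 0 1 * Equiv.swap 2 3, Equiv.swap 0 2 * Equiv.swap 1 3,
        Equiv.swap 0 3 * Equiv.swap 1 2})
    (h₂ : (G₂ : Set (Equiv.Perm (Fin 6))) =
      {1, Equiv.swap 0 1 * Equiv.swap 2 3, Equiv.swap 0 1 * Equiv.swap 4 5,
        Equiv.swap 2 3 * Equiv.swap 4 5}) :
    (¬ ∃ g : Equiv.Perm (Fin 6),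
        Subgroup.map (MulAut.conj g).toMonoidHom G₁ = G₂) ∧
      ∀ g : Equiv.Perm (Fin 6),
        Nat.card {x : Equiv.Perm (Fin 6) | IsConj g x ∧ x ∈ G₁}
          = Nat.card {x : Equiv.Perm (Fin 6) | IsConj g x ∧ x ∈ G₂} := by
  have m1 : ∀ x, x ∈ G₁ ↔ x ∈ ({1, a1, a2, a3} : Set (Equiv.Perm (Fin 6))) := fun x => by
    rw [← SetLike.mem_coe, h₁]
  have m2 : ∀ x, x ∈ G₂ ↔ x ∈ ({1, a1, b2, b3} : Set (Equiv.Perm (Fin 6))) := fun x => by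
    rw [← SetLike.mem_coe, h₂]
  constructor
  · rintro ⟨g, hg⟩
    have hfix : ∀ x ∈ G₂, x (g 4) = g 4 := by
      intro x hx
      have hx' : x ∈ Subgroup.map (MulAut.conj g).toMonoidHom G₁ := hg ▸ hx
      obtain ⟨y, hy, rfl⟩ := hx'
      have hy4 : y 4 = 4 := by
        rw [h₁] at hy
        simp only [Set.mem_insert_iff, Set.mem_singleton_iff] at hy
        rcases hy with rfl | rfl | rfl | rfl <;> decide
      show (MulAut.conj g y) (g 4) = g 4
      rw [MulAut.conj_apply]
      simp [Equiv.Perm.mul_apply, hy4]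
    have hb1 : a1 ∈ G₂ := (m2 a1).mpr (by simp)
    have hb2 : b2 ∈ G₂ := (m2 b2).mpr (by simp)
    have h1 := hfix _ hb1
    have h2 := hfix _ hb2
    revert h1 h2
    generalize g 4 = p
    revert p; decide
  · intro g
    have one1 : (1 : Equiv.Perm (Fin 6)) ∈ G₁ := (m1 1).mpr (by simp)
    have one2 : (1 : Equiv.Perm (Fin 6)) ∈ G₂ := (m2 1).mpr (by simp)
    by_cases hg1 : IsConj g 1
    · have hg : g = 1 := isConj_one_left.mp hg1
      subst hg
      have e1 : {x : Equiv.Perm (Fin 6) | IsConj 1 x ∧ x ∈ G₁} = {1} := by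
        ext x
        simp only [Set.mem_setOf_eq, Set.mem_singleton_iff, isConj_one_right]
        exact ⟨fun h => h.1, fun h => ⟨h, h ▸ one1⟩⟩
      have e2 : {x : Equiv.Perm (Fin 6) | IsConj 1 x ∧ x ∈ G₂} = {1} := by
        ext x
        simp only [Set.mem_setOf_eq, Set.mem_singleton_iff, isConj_one_right]
        exact ⟨fun h => h.1, fun h => ⟨h, h ▸ one2⟩⟩
      rw [e1, e2]
    · by_cases hga : IsConj g a1
      · have hne1 : ¬ IsConj g 1 := hg1
        have e1 : {x : Equiv.Perm (Fin 6) | IsConj g x ∧ x ∈ G₁} =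
            ({a1, a2, a3} : Set (Equiv.Perm (Fin 6))) := by
          ext x
          simp only [Set.mem_setOf_eq, m1, Set.mem_insert_iff, Set.mem_singleton_iff]
          constructor
          · rintro ⟨hc, rfl | h⟩
            · exact absurd hc hne1
            · exact h
          · rintro (rfl | rfl | rfl)
            · exact ⟨hga, Or.inr (Or.inl rfl)⟩
            · exact ⟨hga.trans conj_a1_a2, Or.inr (Or.inr (Or.inl rfl))⟩
            · exact ⟨hga.trans conj_a1_a3, Or.inr (Or.inr (Or.inr rfl))⟩
        have e2 : {x : Equiv.Perm (Fin 6) | IsConj g x ∧ x ∈ G₂} =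
            ({a1, b2, b3} : Set (Equiv.Perm (Fin 6))) := by
          ext x
          simp only [Set.mem_setOf_eq, m2, Set.mem_insert_iff, Set.mem_singleton_iff]
          constructor
          · rintro ⟨hc, rfl | h⟩
            · exact absurd hc hne1
            · exact h
          · rintro (rfl | rfl | rfl)
            · exact ⟨hga, Or.inr (Or.inl rfl)⟩
            · exact ⟨hga.trans conj_a1_b2, Or.inr (Or.inr (Or.inl rfl))⟩
            · exact ⟨hga.trans conj_a1_b3, Or.inr (Or.inr (Or.inr rfl))⟩
        rw [e1, e2, Nat.card_coe_set_eq, Nat.card_coe_set_eq]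
        rw [Set.ncard_insert_of_notMem (by decide), Set.ncard_insert_of_notMem (by decide),
          Set.ncard_insert_of_notMem (by decide), Set.ncard_insert_of_notMem (by decide),
          Set.ncard_singleton, Set.ncard_singleton]
      · have e1 : {x : Equiv.Perm (Fin 6) | IsConj g x ∧ x ∈ G₁} = ∅ := by
          ext x
          simp only [Set.mem_setOf_eq, m1, Set.mem_insert_iff, Set.mem_singleton_iff,
            Set.mem_empty_iff_false, iff_false, not_and]
          rintro hc (rfl | rfl | rfl | rfl)
          · exact hg1 hc
          · exact hga hc
          · exact hga (hc.trans conj_a1_a2.symm)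
          · exact hga (hc.trans conj_a1_a3.symm)
        have e2 : {x : Equiv.Perm (Fin 6) | IsConj g x ∧ x ∈ G₂} = ∅ := by
          ext x
          simp only [Set.mem_setOf_eq, m2, Set.mem_insert_iff, Set.mem_singleton_iff,
            Set.mem_empty_iff_false, iff_false, not_and]
          rintro hc (rfl | rfl | rfl | rfl)
          · exact hg1 hc
          · exact hga hc
          · exact hga (hc.trans conj_a1_b2.symm)
          · exact hga (hc.trans conj_a1_b3.symm)
        rw [e1, e2]
end
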